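/- arXiv:2304.05007 — 2 statements merged into one kernel-verified Lean document; each statement's English description precedes it below -/
import Mathlib

section
/- Let Y be a finite type, X an input set, n ≥ 1 an integer, and R₁, R₂ : X → PMF(Y). Fix x₁⁰, x₁¹ ∈ X and write μ⁰ = R₁(x₁⁰), μ¹ = R₁(x₁¹). Let G = {y : μ¹(y) > μ⁰(y)} and L = {y : μ¹(y) < μ⁰(y)}, assume β := ∑_{y∈G}(μ¹(y) − μ⁰(y)) > 0, and assume the balance condition (∑_{y∈G} μ¹(y)) / (∑_{y∈G} μ⁰(y)) = (∑_{y∈L} μ⁰(y)) / (∑_{y∈L} μ¹(y)) =: p (so p > 1). Fix x* ∈ X with ∑_{y∈G} R₂(x*)(y) > 0 and ∑_{y∈L} R₂(x*)(y) > 0. Set α = β/(p−1), r₁ = ∑_{y∈G} R₂(x*)(y) and r₀ = ∑_{y∈L} R₂(x*)(y) (equivalently, r₁ = pα/q₁ and r₀ = pα/q₀ with q₁ = (∑_{y∈G} μ¹(y))/(∑_{y∈G} R₂(x*)(y)) and q₀ = (∑_{y∈L} μ⁰(y))/(∑_{y∈L} R₂(x*)(y))); note pα + α ≤ 1 and r₀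 + r₁ ≤ 1 hold automatically. Let (P^{r₀,r₁}, Q^{r₀,r₁}) be the pair with parameters n, p, α, r₀, r₁. Then for every real γ ≥ 0: D_γ( S(R₁(x₁⁰), R₂(x*), …, R₂(x*)) ‖ S(R₁(x₁¹), R₂(x*), …, R₂(x*)) ) ≥ D_γ( P^{r₀,r₁} ‖ Q^{r₀,r₁} ), where R₂(x*) appears n−1 times in each shuffle. -/
/-! Counting how many messages of the shuffled multiset fall in `L = {μ¹ < μ⁰}` and in
`G = {μ¹ > μ⁰}` is a post-processing, so it can only decrease the hockey-stick divergence.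
The balance condition forces `μ⁰(L) = μ¹(G) = pα` and `μ⁰(G) = μ¹(L) = α`, so the first user
adds `(1,0)`, `(0,1)` or `(0,0)` to the counts with probabilities `pα, α, 1 - pα - α` under
`x₁⁰` and with the roles of the two coordinates swapped under `x₁¹`. Each of the other users
adds `(1,0)` or `(0,1)` with probabilities `r₀, r₁`, and the sum of `n - 1` such increments is
`Binomial(n - 1, r₀ + r₁)` thinned with parameter `r₀ / (r₀ + r₁)`. Hence the counts are
distributed exactly as `P^{r₀,r₁}` and `Q^{r₀,r₁}`. -/

open scoped ENNReal
open Finset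

noncomputable section

/-- Clamp a real number into an `ℝ≥0∞` probability (identity on `[0,1]`). -/
def prob (x : ℝ) : ℝ≥0∞ := min (ENNReal.ofReal x) 1

lemma prob_le_one (x : ℝ) : prob x ≤ 1 := min_le_right _ _

/-- Hockey-stick divergence `D_γ(P‖Q) = ∑_y max 0 (P y − γ·Q y)`. -/
def hsDiv {Y : Type*} (P Q : PMF Y) (γ : ℝ) : ℝ :=
  ∑' y, max 0 ((P y).toReal - γ * (Q y).toReal)

/-- The shuffle of a list of PMFs: sample independently and return the multiset of results. -/
def shuffle {Y : Type*} : List (PMF Y) → PMF (Multiset Y)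
  | [] => PMF.pure 0
  | μ :: μs => μ.bind fun y => (shuffle μs).map fun s => y ::ₘ s

/-- Binomial law on ℕ with `m` trials and success probability `θ` (a real, clamped). -/
def binomN (θ : ℝ) (m : ℕ) : PMF ℕ :=
  (PMF.binomial (prob θ).toNNReal
    (by simpa using ENNReal.toNNReal_mono ENNReal.one_ne_top (prob_le_one θ)) m).map Fin.val

/-- Three-point distribution on `Fin 3` with weights `w1, w2, 1 − w1 − w2` (clamped). -/
def triR (w1 w2 : ℝ) : PMF (Fin 3) :=
  PMF.ofFintype
    ![prob w1, min (prob w2) (1 - prob w1),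
      1 - (prob w1 + min (prob w2) (1 - prob w1))]
    (by
      have h : prob w1 + min (prob w2) (1 - prob w1) ≤ 1 := by
        calc prob w1 + min (prob w2) (1 - prob w1)
            ≤ prob w1 + (1 - prob w1) := by gcongr; exact min_le_right _ _
          _ = 1 := add_tsub_cancel_of_le (prob_le_one w1)
      simp only [Fin.sum_univ_three, Matrix.cons_val_zero, Matrix.cons_val_one,
        Matrix.head_cons, Matrix.cons_val_two, Matrix.tail_cons]
      exact add_tsub_cancel_of_le h)

/-- Law of `(A+Δ₁, C−A+Δ₂)` where `C ~ Binomial(m, θC)`, `A ~ Binomial(C, θA)`, and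
`(Δ₁,Δ₂)` equals `(1,0)` w.p. `w1`, `(0,1)` w.p. `w2`, `(0,0)` otherwise. -/
def lawP (m : ℕ) (θC θA w1 w2 : ℝ) : PMF (ℕ × ℕ) :=
  (binomN θC m).bind fun c =>
    (binomN θA c).bind fun a =>
      (triR w1 w2).map fun d =>
        if d = 0 then (a + 1, c - a) else if d = 1 then (a, c - a + 1) else (a, c - a)

/-- Law of `(A+Δ₂, C−A+Δ₁)` for the same sampling process. -/
def lawQ (m : ℕ) (θC θA w1 w2 : ℝ) : PMF (ℕ × ℕ) :=
  (binomN θC m).bind fun c =>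
    (binomN θA c).bind fun a =>
      (triR w1 w2).map fun d =>
        if d = 0 then (a, c - a + 1) else if d = 1 then (a + 1, c - a) else (a, c - a)

/-- `P^q_{β,p}` with `n` users: `α = β/(p−1)`, `r = pα/q`, `C ~ Binomial(n−1, 2r)`,
`A ~ Binomial(C, 1/2)`. -/
def Pq (n : ℕ) (p β q : ℝ) : PMF (ℕ × ℕ) :=
  lawP (n - 1) (2 * (p * (β / (p - 1)) / q)) (1 / 2) (p * (β / (p - 1))) (β / (p - 1))

/-- `Q^q_{β,p}`. -/
def Qq (n : ℕ) (p β q : ℝ) : PMF (ℕ × ℕ) :=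
  lawQ (n - 1) (2 * (p * (β / (p - 1)) / q)) (1 / 2) (p * (β / (p - 1))) (β / (p - 1))

/-- `CDF_{c,θ}[c₁,c₂] = ∑_{c₁ ≤ i ≤ c₂, 0 ≤ i ≤ c} C(c,i) θ^i (1−θ)^{c−i}`. -/
def binCDF (c : ℕ) (θ : ℝ) (c1 c2 : ℝ) : ℝ :=
  ∑ i ∈ Finset.range (c + 1),
    if c1 ≤ (i : ℝ) ∧ (i : ℝ) ≤ c2 then (c.choose i : ℝ) * θ ^ i * (1 - θ) ^ (c - i) else 0

/-- Expectation of `f` under `Binomial(m, θ)`. -/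
def binExp (m : ℕ) (θ : ℝ) (f : ℕ → ℝ) : ℝ :=
  ∑ c ∈ Finset.range (m + 1), (m.choose c : ℝ) * θ ^ c * (1 - θ) ^ (m - c) * f c

/-- The `(p, β)`-variation property of the first randomizer. -/
def VariationProp {X Y : Type*} (R1 : X → PMF Y) (p β : ℝ) : Prop :=
  ∀ x x' : X, (∀ y, (R1 x y).toReal ≤ p * (R1 x' y).toReal) ∧ hsDiv (R1 x) (R1 x') 1 ≤ β

/-- The `q`-ratio property of the first randomizer w.r.t. the others. -/
def RatioProp {X Y : Type*} {m : ℕ} (R1 : X → PMF Y) (R : Fin m → X → PMF Y) (q : ℝ) : Prop :=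
  ∀ (i : Fin m) (x x' : X) (y : Y), (R1 x y).toReal ≤ q * (R i x' y).toReal


/-- The set where `μ1` puts strictly more mass than `μ0`. -/
def Gset {Y : Type*} [Fintype Y] (μ0 μ1 : PMF Y) : Finset Y :=
  Finset.univ.filter fun y => (μ0 y).toReal < (μ1 y).toReal


namespace PMF

variable {α β : Type*}

lemma map_apply_of_injective {f : α → β} (hf : Function.Injective f) (p : PMF α) (a : α) :
    p.map f (f a) = p a := by
  rw [map_apply, tsum_eq_single a fun a' ha' => if_neg (hf.ne ha').symm, if_pos rfl]

lemma map_apply_eq_zero {f : α → β} (p : PMF α) {b : β} (hb : b ∉ Set.range f) :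
    p.map f b = 0 := by
  rw [map_apply]
  exact ENNReal.tsum_eq_zero.mpr fun a => if_neg fun h => hb ⟨a, h.symm⟩

lemma map_apply_eq_sum (p : PMF α) (f : α → β) (b : β) (s : Finset α)
    (hs : ∀ a, f a = b ↔ a ∈ s) : p.map f b = ∑ a ∈ s, p a := by
  rw [← toOuterMeasure_apply_singleton, toOuterMeasure_map_apply, ← toOuterMeasure_apply_finset]
  congr 1
  ext a
  simp [hs]

lemma map_add_left_apply {M : Type*} [AddCommMonoid M] [PartialOrder M] [CanonicallyOrderedAdd M]
    [Sub M] [OrderedSub M] [IsLeftCancelAdd M] [DecidableLE M] (p : PMF M) (v z : M) :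
    p.map (v + ·) z = if v ≤ z then p (z - v) else 0 := by
  split_ifs with h
  · conv_lhs => rw [← add_tsub_cancel_of_le h]
    exact map_apply_of_injective (add_right_injective v) p _
  · exact map_apply_eq_zero p fun ⟨x, hx⟩ => h (hx ▸ le_self_add)

lemma ext_of_forall_ne {p q : PMF α} (a : α) (h : ∀ b, b ≠ a → p b = q b) : p = q := by
  classical
  ext b
  rcases eq_or_ne b a with rfl | hb
  · have hp := p.tsum_coe
    have hq := q.tsum_coe
    rw [ENNReal.tsum_eq_add_tsum_ite b] at hp hq
    have hrest : (∑' x, if x = b then 0 else q x) = ∑' x, if x = b then 0 else p x :=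
      tsum_congr fun x => by split_ifs with hx <;> simp [h x, hx]
    rw [hrest, ← hp] at hq
    exact ((ENNReal.add_left_inj (ne_top_of_le_ne_top ENNReal.one_ne_top
      (hp ▸ le_add_self))).mp hq).symm
  · exact h b hb

lemma ofReal_sum_toReal (p : PMF α) (s : Finset α) :
    ENNReal.ofReal (∑ a ∈ s, (p a).toReal) = ∑ a ∈ s, p a := by
  rw [ENNReal.ofReal_sum_of_nonneg fun _ _ => ENNReal.toReal_nonneg]
  exact Finset.sum_congr rfl fun a _ => ENNReal.ofReal_toReal (p.apply_ne_top a)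

lemma sum_toReal_add_sum_toReal_le_one (p : PMF α) {s t : Finset α} (hst : Disjoint s t) :
    ∑ a ∈ s, (p a).toReal + ∑ a ∈ t, (p a).toReal ≤ 1 := by
  classical
  rw [← Finset.sum_union hst, ← ENNReal.toReal_sum fun a _ => p.apply_ne_top a]
  exact ENNReal.toReal_le_of_le_ofReal zero_le_one
    (by simpa [p.tsum_coe] using ENNReal.sum_le_tsum (f := p) (s ∪ t))

lemma sum_univ_toReal [Fintype α] (p : PMF α) : ∑ a, (p a).toReal = 1 := by
  rw [← ENNReal.toReal_sum fun a _ => p.apply_ne_top a,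
    ← tsum_fintype (L := SummationFilter.unconditional α), p.tsum_coe, ENNReal.toReal_one]

end PMF

lemma ENNReal.toReal_tsub_eq_max {a b : ℝ≥0∞} (ha : a ≠ ⊤) (hb : b ≠ ⊤) :
    (a - b).toReal = max 0 (a.toReal - b.toReal) := by
  rcases le_total b a with h | h
  · rw [ENNReal.toReal_sub_of_le h ha, max_eq_right (sub_nonneg.mpr (ENNReal.toReal_mono ha h))]
  · rw [tsub_eq_zero_of_le h, ENNReal.toReal_zero,
      max_eq_left (sub_nonpos.mpr (ENNReal.toReal_mono hb h))]

section HockeyStick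

variable {A B : Type*}

lemma hsDiv_eq_toReal_tsum (P Q : PMF A) {γ : ℝ} (hγ : 0 ≤ γ) :
    hsDiv P Q γ = (∑' y, (P y - ENNReal.ofReal γ * Q y)).toReal := by
  rw [ENNReal.tsum_toReal_eq fun y => ne_top_of_le_ne_top (P.apply_ne_top y) tsub_le_self]
  refine tsum_congr fun y => ?_
  rw [ENNReal.toReal_tsub_eq_max (P.apply_ne_top y)
    (ENNReal.mul_ne_top ENNReal.ofReal_ne_top (Q.apply_ne_top y)), ENNReal.toReal_mul,
    ENNReal.toReal_ofReal hγ]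

lemma tsum_tsub_mul_le_one (P Q : PMF A) (c : ℝ≥0∞) : ∑' y, (P y - c * Q y) ≤ 1 :=
  P.tsum_coe ▸ ENNReal.tsum_le_tsum fun _ => tsub_le_self

lemma tsum_map_tsub_mul_le (P Q : PMF A) (f : A → B) (c : ℝ≥0∞) :
    ∑' b, (P.map f b - c * Q.map f b) ≤ ∑' a, (P a - c * Q a) := by
  classical
  calc ∑' b, (P.map f b - c * Q.map f b)
      ≤ ∑' b, ∑' a, if b = f a then P a - c * Q a else 0 := by
        refine ENNReal.tsum_le_tsum fun b => ?_
        rw [tsub_le_iff_right, PMF.map_apply, PMF.map_apply, ← ENNReal.tsum_mul_left,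
          ← ENNReal.tsum_add]
        refine ENNReal.tsum_le_tsum fun a => ?_
        split_ifs
        · exact le_tsub_add
        · simp
    _ = ∑' a, (P a - c * Q a) := by
        rw [ENNReal.tsum_comm]
        exact tsum_congr fun a => tsum_ite_eq (f a) _

theorem hsDiv_map_le (P Q : PMF A) (f : A → B) {γ : ℝ} (hγ : 0 ≤ γ) :
    hsDiv (P.map f) (Q.map f) γ ≤ hsDiv P Q γ := by
  rw [hsDiv_eq_toReal_tsum _ _ hγ, hsDiv_eq_toReal_tsum _ _ hγ]
  exact ENNReal.toReal_mono (ne_top_of_le_ne_top ENNReal.one_ne_top (tsum_tsub_mul_le_one _ _ _))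
    (tsum_map_tsub_mul_le _ _ _ _)

end HockeyStick

lemma prob_of_le_one {x : ℝ} (h : x ≤ 1) : prob x = ENNReal.ofReal x :=
  min_eq_left (ENNReal.ofReal_le_one.mpr h)

-- The truncated `m - k` is harmless: `m.choose k = 0` for `k > m`.
def binWeight (θ : ℝ≥0∞) (m k : ℕ) : ℝ≥0∞ := θ ^ k * (1 - θ) ^ (m - k) * m.choose k

section BinWeight

variable (θ : ℝ≥0∞)

lemma binWeight_of_lt {m k : ℕ} (h : m < k) : binWeight θ m k = 0 := by
  simp [binWeight, Nat.choose_eq_zero_of_lt h]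

lemma binWeight_succ_zero (m : ℕ) : binWeight θ (m + 1) 0 = (1 - θ) * binWeight θ m 0 := by
  simp [binWeight, pow_succ, mul_comm]

lemma binWeight_succ_succ (m k : ℕ) :
    binWeight θ (m + 1) (k + 1) = θ * binWeight θ m k + (1 - θ) * binWeight θ m (k + 1) := by
  rcases lt_or_ge k m with h | h
  · obtain ⟨j, rfl⟩ := Nat.exists_eq_add_of_lt h
    simp only [binWeight, Nat.choose_succ_succ (k + j + 1) k,
      show k + j + 1 + 1 - (k + 1) = j + 1 by omega, show k + j + 1 - k = j + 1 by omega,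
      show k + j + 1 - (k + 1) = j by omega]
    push_cast
    ring
  · rw [binWeight_of_lt θ (Nat.lt_succ_of_le h)]
    simp only [binWeight, Nat.choose_succ_succ, Nat.choose_eq_zero_of_lt (Nat.lt_succ_of_le h),
      show m + 1 - (k + 1) = m - k by omega]
    push_cast
    ring

end BinWeight

set_option linter.deprecated false in
lemma binomN_apply (θ : ℝ) (m k : ℕ) : binomN θ m k = binWeight (prob θ) m k := by
  rcases le_or_gt k m with h | h
  · rw [binomN, show k = (⟨k, Nat.lt_succ_of_le h⟩ : Fin (m + 1)).val from rfl,
      PMF.map_apply_of_injective Fin.val_injective]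
    refine (PMF.binomial_apply _ _ m _).trans ?_
    rw [ENNReal.coe_toNNReal (ne_top_of_le_ne_top ENNReal.one_ne_top (prob_le_one θ))]
    rfl
  · rw [binomN, binWeight_of_lt _ h]
    exact PMF.map_apply_eq_zero _ fun ⟨i, hi⟩ => by omega

-- The law of `(A, C - A)` in the sampling process of `lawP` and `lawQ`.
def lawCounts (θC θA : ℝ) (m : ℕ) : PMF (ℕ × ℕ) :=
  (binomN θC m).bind fun c => (binomN θA c).map fun a => (a, c - a)

lemma lawCounts_apply (θC θA : ℝ) (m a b : ℕ) :
    lawCounts θC θA m (a, b) = binWeight (prob θC) m (a + b) * binWeight (prob θA) (a + b) a := by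
  have hinj : ∀ c : ℕ, Function.Injective fun a : ℕ => (a, c - a) :=
    fun c => Function.LeftInverse.injective (g := Prod.fst) fun _ => rfl
  rw [lawCounts, PMF.bind_apply, tsum_eq_single (a + b), binomN_apply,
    show ((a, b) : ℕ × ℕ) = (a, a + b - a) by simp, PMF.map_apply_of_injective (hinj _),
    binomN_apply]
  intro c hc
  by_cases hab : ((a, b) : ℕ × ℕ) ∈ Set.range fun a' : ℕ => (a', c - a')
  · obtain ⟨a', ha'⟩ := hab
    obtain ⟨rfl, hb⟩ : a' = a ∧ c - a' = b := Prod.mk.inj ha'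
    rw [← ha', PMF.map_apply_of_injective (hinj _), binomN_apply θA,
      binWeight_of_lt _ (show c < a' by omega), mul_zero]
  · rw [PMF.map_apply_eq_zero _ hab, mul_zero]

lemma lawCounts_zero (θC θA : ℝ) : lawCounts θC θA 0 = PMF.pure 0 := by
  ext ⟨a, b⟩
  rw [lawCounts_apply, PMF.pure_apply]
  rcases Nat.eq_zero_or_pos (a + b) with hab | hab
  · obtain ⟨rfl, rfl⟩ : a = 0 ∧ b = 0 := by omega
    simp [binWeight]
  · rw [binWeight_of_lt _ hab, zero_mul, if_neg fun h => by simp_all [Prod.ext_iff]]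

lemma triR_apply_zero (w1 w2 : ℝ) : triR w1 w2 0 = prob w1 := rfl

lemma triR_apply_one {w1 w2 : ℝ} (h1 : 0 ≤ w1) (h2 : 0 ≤ w2) (h : w1 + w2 ≤ 1) :
    triR w1 w2 1 = ENNReal.ofReal w2 := by
  change min (prob w2) (1 - prob w1) = _
  rw [prob_of_le_one (by linarith), prob_of_le_one (by linarith), min_eq_left]
  rw [ENNReal.le_sub_iff_add_le_left ENNReal.ofReal_ne_top
    (ENNReal.ofReal_le_one.mpr (by linarith)), ← ENNReal.ofReal_add h1 h2]
  exact ENNReal.ofReal_le_one.mpr h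

lemma triR_apply_two (w1 w2 : ℝ) : triR w1 w2 2 = 1 - (triR w1 w2 0 + triR w1 w2 1) := rfl

def deltaP : Fin 3 → ℕ × ℕ := ![(1, 0), (0, 1), (0, 0)]

def deltaQ : Fin 3 → ℕ × ℕ := ![(0, 1), (1, 0), (0, 0)]

-- In each of the four cases this is Pascal's rule applied to both binomial factors.
lemma lawCounts_succ {θC θA : ℝ} (hC0 : 0 ≤ θC) (hC1 : θC ≤ 1) (hA0 : 0 ≤ θA) (hA1 : θA ≤ 1)
    (m : ℕ) :
    ((triR (θC * θA) (θC * (1 - θA))).map deltaP).bind (fun v => (lawCounts θC θA m).map (v + ·))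
      = lawCounts θC θA (m + 1) := by
  have h0 : triR (θC * θA) (θC * (1 - θA)) 0 = prob θC * prob θA := by
    rw [triR_apply_zero, prob_of_le_one (mul_le_one₀ hC1 hA0 hA1), ENNReal.ofReal_mul hC0,
      prob_of_le_one hC1, prob_of_le_one hA1]
  have h1 : triR (θC * θA) (θC * (1 - θA)) 1 = prob θC * (1 - prob θA) := by
    rw [triR_apply_one (mul_nonneg hC0 hA0) (mul_nonneg hC0 (by linarith)) (by nlinarith),
      ENNReal.ofReal_mul hC0, ENNReal.ofReal_sub _ hA0, ENNReal.ofReal_one,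
      prob_of_le_one hC1, prob_of_le_one hA1]
  have h2 : triR (θC * θA) (θC * (1 - θA)) 2 = 1 - prob θC := by
    rw [triR_apply_two, h0, h1, ← mul_add, add_tsub_cancel_of_le (prob_le_one θA), mul_one]
  ext ⟨i, j⟩
  rw [PMF.bind_map, PMF.bind_apply, tsum_fintype, Fin.sum_univ_three]
  simp only [Function.comp_apply, PMF.map_add_left_apply, h0, h1, h2, deltaP,
    Matrix.cons_val_zero, Matrix.cons_val_one, Matrix.cons_val_two, Matrix.head_cons,
    Matrix.tail_cons]
  rcases i with _ | i <;> rcases j with _ | j <;>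
    simp only [Prod.mk_le_mk, Prod.mk_sub_mk, le_refl, zero_le, Nat.le_zero, one_ne_zero,
      le_add_iff_nonneg_left, and_true, and_false, if_true, if_false, Nat.sub_zero,
      Nat.add_sub_cancel, lawCounts_apply, mul_zero, zero_add, add_zero]
  · rw [binWeight_succ_zero]
    ring
  · rw [binWeight_succ_succ (prob θC) m j, binWeight_succ_zero (prob θA) j]
    ring
  · rw [binWeight_succ_succ (prob θC) m i, binWeight_succ_succ (prob θA) i i,
      binWeight_of_lt _ (Nat.lt_succ_self i)]
    ring
  · rw [show i + (j + 1) = i + j + 1 by ring, show i + 1 + j = i + j + 1 by ring,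
      show i + 1 + (j + 1) = i + j + 1 + 1 by ring, binWeight_succ_succ (prob θC) m (i + j + 1),
      binWeight_succ_succ (prob θA) (i + j + 1) i]
    ring

lemma bind_binomN_map_triR (m : ℕ) (θC θA w1 w2 : ℝ) (δ : Fin 3 → ℕ × ℕ) :
    ((binomN θC m).bind fun c => (binomN θA c).bind fun a =>
        (triR w1 w2).map fun d => δ d + (a, c - a)) =
      ((triR w1 w2).map δ).bind fun v => (lawCounts θC θA m).map (v + ·) := by
  simp only [lawCounts, PMF.bind_map, PMF.map_bind, PMF.map_comp, Function.comp_def]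
  conv_rhs => rw [PMF.bind_comm]
  refine congrArg _ (funext fun c => ?_)
  simp only [← PMF.bind_pure_comp, Function.comp_def]
  rw [PMF.bind_comm]

lemma lawP_eq_bind (m : ℕ) (θC θA w1 w2 : ℝ) :
    lawP m θC θA w1 w2 =
      ((triR w1 w2).map deltaP).bind fun v => (lawCounts θC θA m).map (v + ·) := by
  rw [← bind_binomN_map_triR, lawP]
  refine congrArg _ <| funext fun c => congrArg _ <| funext fun a =>
    congrArg (PMF.map · _) <| funext fun d => ?_
  fin_cases d <;> simp [deltaP, add_comm]

lemma lawQ_eq_bind (m : ℕ) (θC θA w1 w2 : ℝ) :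
    lawQ m θC θA w1 w2 =
      ((triR w1 w2).map deltaQ).bind fun v => (lawCounts θC θA m).map (v + ·) := by
  rw [← bind_binomN_map_triR, lawQ]
  refine congrArg _ <| funext fun c => congrArg _ <| funext fun a =>
    congrArg (PMF.map · _) <| funext fun d => ?_
  fin_cases d <;> simp [deltaQ, add_comm]

section Shuffle

variable {Y : Type*}

lemma map_shuffle_cons_sum {M : Type*} [AddCommMonoid M] (f : Y → M) (μ : PMF Y)
    (l : List (PMF Y)) :
    (shuffle (μ :: l)).map (fun s => (s.map f).sum) =
      (μ.map f).bind fun v => ((shuffle l).map fun s => (s.map f).sum).map (v + ·) := by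
  simp only [shuffle, PMF.map_bind, PMF.bind_map, PMF.map_comp, Function.comp_def,
    Multiset.map_cons, Multiset.sum_cons]

lemma map_shuffle_replicate_sum (f : Y → ℕ × ℕ) (ν : PMF Y) {θC θA : ℝ} (hC0 : 0 ≤ θC)
    (hC1 : θC ≤ 1) (hA0 : 0 ≤ θA) (hA1 : θA ≤ 1)
    (hν : ν.map f = (triR (θC * θA) (θC * (1 - θA))).map deltaP) (m : ℕ) :
    (shuffle (List.replicate m ν)).map (fun s => (s.map f).sum) = lawCounts θC θA m := by
  induction m with
  | zero => rw [lawCounts_zero, List.replicate_zero, shuffle, PMF.pure_map]; rfl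
  | succ m ih =>
    rw [List.replicate_succ, map_shuffle_cons_sum, ih, hν, lawCounts_succ hC0 hC1 hA0 hA1]

variable [DecidableEq Y] {L G : Finset Y}

-- `deltaP ∘ region L G` is the pair of indicators of `L` and `G`.
def region (L G : Finset Y) (y : Y) : Fin 3 := if y ∈ L then 0 else if y ∈ G then 1 else 2

lemma region_eq_zero_iff {y : Y} : region L G y = 0 ↔ y ∈ L := by
  unfold region
  split_ifs <;> simp_all

lemma region_eq_one_iff (hLG : Disjoint L G) {y : Y} : region L G y = 1 ↔ y ∈ G := by
  by_cases hL : y ∈ L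
  · simp [region, hL, Finset.disjoint_left.mp hLG hL]
  · simp [region, hL]

lemma deltaP_comp_region (hLG : Disjoint L G) : deltaP ∘ region L G = deltaQ ∘ region G L := by
  funext y
  by_cases hL : y ∈ L
  · simp [region, hL, Finset.disjoint_left.mp hLG hL, deltaP, deltaQ]
  · by_cases hG : y ∈ G <;> simp [region, hL, hG, deltaP, deltaQ]

lemma map_region (hLG : Disjoint L G) (μ : PMF Y) :
    μ.map (region L G) = triR (∑ y ∈ L, (μ y).toReal) (∑ y ∈ G, (μ y).toReal) := by
  have hL := Finset.sum_nonneg fun y (_ : y ∈ L) => (μ y).toReal_nonneg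
  have hG := Finset.sum_nonneg fun y (_ : y ∈ G) => (μ y).toReal_nonneg
  have hLG1 := μ.sum_toReal_add_sum_toReal_le_one hLG
  refine PMF.ext_of_forall_ne 2 fun d hd => ?_
  obtain rfl | rfl : d = 0 ∨ d = 1 := by fin_cases d <;> simp_all
  · rw [triR_apply_zero, prob_of_le_one (by linarith), PMF.ofReal_sum_toReal]
    exact μ.map_apply_eq_sum _ _ _ fun y => region_eq_zero_iff
  · rw [triR_apply_one hL hG hLG1, PMF.ofReal_sum_toReal]
    exact μ.map_apply_eq_sum _ _ _ fun y => region_eq_one_iff hLG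

lemma map_shuffle_replicate_region (hLG : Disjoint L G) (ν : PMF Y) (m : ℕ) {r0 r1 : ℝ}
    (hr0 : ∑ y ∈ L, (ν y).toReal = r0) (hr1 : ∑ y ∈ G, (ν y).toReal = r1) :
    (shuffle (List.replicate m ν)).map (fun s => (s.map (deltaP ∘ region L G)).sum) =
      lawCounts (r0 + r1) (r0 / (r0 + r1)) m := by
  have h0 : 0 ≤ r0 := hr0 ▸ Finset.sum_nonneg fun _ _ => ENNReal.toReal_nonneg
  have h1 : 0 ≤ r1 := hr1 ▸ Finset.sum_nonneg fun _ _ => ENNReal.toReal_nonneg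
  have hs : r0 + r1 ≤ 1 := hr0 ▸ hr1 ▸ ν.sum_toReal_add_sum_toReal_le_one hLG
  have hmul : (r0 + r1) * (r0 / (r0 + r1)) = r0 := mul_div_cancel_of_imp' fun h => by linarith
  refine map_shuffle_replicate_sum _ ν (by linarith) hs (div_nonneg h0 (by linarith))
    (div_le_one_of_le₀ (by linarith) (by linarith)) ?_ m
  rw [← PMF.map_comp, map_region hLG, hr0, hr1, hmul, mul_one_sub, hmul, add_sub_cancel_left]

lemma map_shuffle_cons_replicate_region (hLG : Disjoint L G) (μ ν : PMF Y) (m : ℕ) {r0 r1 : ℝ}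
    (hr0 : ∑ y ∈ L, (ν y).toReal = r0) (hr1 : ∑ y ∈ G, (ν y).toReal = r1) :
    (shuffle (μ :: List.replicate m ν)).map (fun s => (s.map (deltaP ∘ region L G)).sum) =
      (μ.map (deltaP ∘ region L G)).bind
        fun v => (lawCounts (r0 + r1) (r0 / (r0 + r1)) m).map (v + ·) := by
  rw [map_shuffle_cons_sum, map_shuffle_replicate_region hLG ν m hr0 hr1]

end Shuffle

section Gset

variable {Y : Type*} [Fintype Y]

lemma disjoint_Gset (μ ν : PMF Y) : Disjoint (Gset μ ν) (Gset ν μ) :=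
  Finset.disjoint_filter.mpr fun _ _ h h' => lt_asymm h h'

lemma sum_Gset_sub_symm (μ ν : PMF Y) :
    ∑ y ∈ Gset μ ν, ((ν y).toReal - (μ y).toReal) =
      ∑ y ∈ Gset ν μ, ((μ y).toReal - (ν y).toReal) := by
  classical
  have hpointwise : ∀ y, ((if (μ y).toReal < (ν y).toReal then (ν y).toReal - (μ y).toReal else 0) -
      if (ν y).toReal < (μ y).toReal then (μ y).toReal - (ν y).toReal else 0) =
        (ν y).toReal - (μ y).toReal := fun y => by
    split_ifs <;> linarith
  rw [← sub_eq_zero]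
  simp only [Gset, Finset.sum_filter]
  rw [← Finset.sum_sub_distrib, Finset.sum_congr rfl fun y _ => hpointwise y,
    Finset.sum_sub_distrib, ν.sum_univ_toReal, μ.sum_univ_toReal, sub_self]
end Gset

lemma eq_div_sub_one_of_eq_div {x y p β : ℝ} (hβ : β = y - x) (hp : p = y / x) (hp1 : 1 < p) :
    x = β / (p - 1) ∧ y = p * (β / (p - 1)) := by
  have hx : x ≠ 0 := by
    rintro rfl
    rw [div_zero] at hp
    linarith
  have hy : y = p * x := by rw [hp, div_mul_cancel₀ _ hx]
  have hxβ : x = β / (p - 1) := by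
    rw [eq_div_iff (by linarith), hβ, hy]
    ring
  exact ⟨hxβ, hxβ ▸ hy⟩

theorem stmt10_general {X Y : Type*} [Fintype Y] (n : ℕ)
    (R1 R2 : X → PMF Y) (x10 x11 xstar : X) (p β α r0 r1 : ℝ)
    (hβ : β = ∑ y ∈ Gset (R1 x10) (R1 x11), ((R1 x11 y).toReal - (R1 x10 y).toReal))
    (hpG : p = (∑ y ∈ Gset (R1 x10) (R1 x11), (R1 x11 y).toReal) /
        (∑ y ∈ Gset (R1 x10) (R1 x11), (R1 x10 y).toReal))
    (hpL : p = (∑ y ∈ Gset (R1 x11) (R1 x10), (R1 x10 y).toReal) /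
        (∑ y ∈ Gset (R1 x11) (R1 x10), (R1 x11 y).toReal))
    (hp : 1 < p)
    (hr1 : r1 = ∑ y ∈ Gset (R1 x10) (R1 x11), (R2 xstar y).toReal)
    (hr0 : r0 = ∑ y ∈ Gset (R1 x11) (R1 x10), (R2 xstar y).toReal)
    (hα : α = β / (p - 1)) (γ : ℝ) (hγ : 0 ≤ γ) :
    hsDiv (shuffle (R1 x10 :: List.replicate (n - 1) (R2 xstar)))
        (shuffle (R1 x11 :: List.replicate (n - 1) (R2 xstar))) γ ≥
      hsDiv (lawP (n - 1) (r0 + r1) (r0 / (r0 + r1)) (p * α) α)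
        (lawQ (n - 1) (r0 + r1) (r0 / (r0 + r1)) (p * α) α) γ := by
  classical
  set L := Gset (R1 x11) (R1 x10)
  set G := Gset (R1 x10) (R1 x11)
  have hLG : Disjoint L G := disjoint_Gset _ _
  obtain ⟨hG0, hG1⟩ := eq_div_sub_one_of_eq_div (β := β)
    (by rw [hβ, Finset.sum_sub_distrib]) hpG hp
  obtain ⟨hL1, hL0⟩ := eq_div_sub_one_of_eq_div (β := β)
    (by rw [hβ, sum_Gset_sub_symm, Finset.sum_sub_distrib]) hpL hp
  rw [← hα] at hG0 hG1 hL0 hL1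
  have hcounts (μ : PMF Y) := map_shuffle_cons_replicate_region hLG μ (R2 xstar) (n - 1)
    hr0.symm hr1.symm
  have hP : (shuffle (R1 x10 :: List.replicate (n - 1) (R2 xstar))).map
      (fun s => (s.map (deltaP ∘ region L G)).sum) =
        lawP (n - 1) (r0 + r1) (r0 / (r0 + r1)) (p * α) α := by
    rw [hcounts, ← PMF.map_comp, map_region hLG, hL0, hG0, lawP_eq_bind]
  have hQ : (shuffle (R1 x11 :: List.replicate (n - 1) (R2 xstar))).map
      (fun s => (s.map (deltaP ∘ region L G)).sum) =
        lawQ (n - 1) (r0 + r1) (r0 / (r0 + r1)) (p * α) α := by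
    rw [hcounts, deltaP_comp_region hLG, ← PMF.map_comp, map_region hLG.symm, hG1, hL1,
      lawQ_eq_bind]
  rw [ge_iff_le, ← hP, ← hQ]
  exact hsDiv_map_le _ _ _ hγ

theorem stmt10 {X Y : Type*} [Fintype Y] (n : ℕ) (hn : 1 ≤ n)
    (R1 R2 : X → PMF Y) (x10 x11 xstar : X) (p β α r0 r1 : ℝ)
    (hβ : β = ∑ y ∈ Gset (R1 x10) (R1 x11), ((R1 x11 y).toReal - (R1 x10 y).toReal))
    (hβpos : 0 < β)
    (hpG : p = (∑ y ∈ Gset (R1 x10) (R1 x11), (R1 x11 y).toReal) /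
        (∑ y ∈ Gset (R1 x10) (R1 x11), (R1 x10 y).toReal))
    (hpL : p = (∑ y ∈ Gset (R1 x11) (R1 x10), (R1 x10 y).toReal) /
        (∑ y ∈ Gset (R1 x11) (R1 x10), (R1 x11 y).toReal))
    (hp : 1 < p)
    (hr1 : r1 = ∑ y ∈ Gset (R1 x10) (R1 x11), (R2 xstar y).toReal) (hr1pos : 0 < r1)
    (hr0 : r0 = ∑ y ∈ Gset (R1 x11) (R1 x10), (R2 xstar y).toReal) (hr0pos : 0 < r0)
    (hα : α = β / (p - 1)) (γ : ℝ) (hγ : 0 ≤ γ) :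
    hsDiv (shuffle (R1 x10 :: List.replicate (n - 1) (R2 xstar)))
        (shuffle (R1 x11 :: List.replicate (n - 1) (R2 xstar))) γ ≥
      hsDiv (lawP (n - 1) (r0 + r1) (r0 / (r0 + r1)) (p * α) α)
        (lawQ (n - 1) (r0 + r1) (r0 / (r0 + r1)) (p * α) α) γ :=
  stmt10_general n R1 R2 x10 x11 xstar p β α r0 r1 hβ hpG hpL hp hr1 hr0 hα γ hγ

end
end

section
/- Let P and Q be probability mass functions on a countable type, let γ ∈ (0, 1] and ε ≥ 0. Then D_{e^ε}( (1−γ)·Q + γ·P ‖ Q ) = γ · D_{(e^ε + γ − 1)/γ}( P ‖ Q ), where (1−γ)·Q + γ·P denotes the pointwise mixture. -/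
open scoped ENNReal
open Finset

noncomputable section

/-- Two-point mixture `γ·P + (1−γ)·Q`. -/
def mix2 {Y : Type*} (γ : ℝ) (P Q : PMF Y) : PMF Y :=
  (PMF.bernoulli (prob γ).toNNReal
    (by simpa using ENNReal.toNNReal_mono ENNReal.one_ne_top (prob_le_one γ))).bind fun b => if b then P else Q

lemma prob_eq_ofReal {x : ℝ} (hx : x ≤ 1) : prob x = ENNReal.ofReal x :=
  min_eq_left (ENNReal.ofReal_le_one.mpr hx)

lemma mix2_apply {Y : Type*} (P Q : PMF Y) {γ : ℝ} (hγ1 : γ ≤ 1) (y : Y) :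
    mix2 γ P Q y = ENNReal.ofReal γ * P y + (1 - ENNReal.ofReal γ) * Q y := by
  rw [mix2, PMF.bind_apply, tsum_bool, add_comm]
  simp [PMF.bernoulli_apply, prob_eq_ofReal hγ1]

lemma mix2_apply_toReal {Y : Type*} (P Q : PMF Y) {γ : ℝ} (hγ0 : 0 ≤ γ) (hγ1 : γ ≤ 1) (y : Y) :
    (mix2 γ P Q y).toReal = γ * (P y).toReal + (1 - γ) * (Q y).toReal := by
  have hγ1' : ENNReal.ofReal γ ≤ 1 := ENNReal.ofReal_le_one.mpr hγ1
  rw [mix2_apply P Q hγ1,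
    ENNReal.toReal_add (ENNReal.mul_ne_top ENNReal.ofReal_ne_top (P.apply_ne_top y))
      (ENNReal.mul_ne_top (ENNReal.sub_ne_top ENNReal.one_ne_top) (Q.apply_ne_top y)),
    ENNReal.toReal_mul, ENNReal.toReal_mul, ENNReal.toReal_sub_of_le hγ1' ENNReal.one_ne_top,
    ENNReal.toReal_ofReal hγ0, ENNReal.toReal_one]

theorem stmt16_general {Y : Type*} (P Q : PMF Y) (γ ε : ℝ)
    (hγ0 : 0 < γ) (hγ1 : γ ≤ 1) :
    hsDiv (mix2 γ P Q) Q (Real.exp ε) = γ * hsDiv P Q ((Real.exp ε + γ - 1) / γ) := by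
  rw [hsDiv, hsDiv, ← tsum_mul_left]
  congr 1 with y
  have hpointwise : γ * (P y).toReal + (1 - γ) * (Q y).toReal - Real.exp ε * (Q y).toReal
      = γ * ((P y).toReal - (Real.exp ε + γ - 1) / γ * (Q y).toReal) := by
    field_simp
    ring
  rw [mix2_apply_toReal P Q hγ0.le hγ1, hpointwise, mul_max_of_nonneg _ _ hγ0.le, mul_zero]

theorem stmt16 {Y : Type*} [Countable Y] (P Q : PMF Y) (γ ε : ℝ)
    (hγ0 : 0 < γ) (hγ1 : γ ≤ 1) (hε : 0 ≤ ε) :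
    hsDiv (mix2 γ P Q) Q (Real.exp ε) = γ * hsDiv P Q ((Real.exp ε + γ - 1) / γ) :=
  stmt16_general P Q γ ε hγ0 hγ1

end
end
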